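/- arXiv:1707.05677 — 3 statements merged into one kernel-verified Lean document; each statement's English description precedes it below -/
import Mathlib

section
/- Every proper subgroup of the symmetric group S4 is isomorphic to one of the following groups: the trivial group, C2, C3, C2 × C2, C4, S3, the dihedral group of order 8, or A4. -/
/-!
A proper subgroup `H` of `S₄` has order a proper divisor of `24`. Groups of order `1`, `2`, `3`
are cyclic, and a group of order `4` is cyclic or a Klein four-group. If `|H| = 6`, `H` contains
an element of order `3`, necessarily a `3`-cycle; the group it generates has index `2` in `H`,
so `H` normalizes it and therefore fixes its unique fixed point. Thus `H` is the full stabilizer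
of that point, a copy of `S₃`. If `|H| = 8`, `H` is a Sylow `2`-subgroup, hence isomorphic to the
symmetry group of the square with vertices `ZMod 4`. If `|H| = 12`, `H` has index `2`, and the
only such subgroup is `A₄`.
-/

open Equiv Equiv.Perm Subgroup Finset
open scoped Nat

namespace S4Subgroups

theorem nonempty_mulEquiv_zmod_of_isCyclic {G : Type*} [Group G] [IsCyclic G] {n : ℕ}
    (hG : Nat.card G = n) : Nonempty (G ≃* Multiplicative (ZMod n)) := by
  subst hG
  exact ⟨(zmodCyclicMulEquiv ‹_›).symm⟩

theorem nonempty_mulEquiv_of_card_eq_four {G : Type*} [Group G] (hG : Nat.card G = 4) :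
    Nonempty (G ≃* (Multiplicative (ZMod 2) × Multiplicative (ZMod 2))) ∨
      Nonempty (G ≃* Multiplicative (ZMod 4)) := by
  by_cases hcyc : IsCyclic G
  · exact Or.inr (nonempty_mulEquiv_zmod_of_isCyclic hG)
  · have : IsKleinFour G :=
      ⟨hG, (not_isCyclic_iff_exponent_eq_prime Nat.prime_two (hG.trans (by norm_num))).mp hcyc⟩
    obtain ⟨e⟩ :=
      IsKleinFour.nonempty_mulEquiv (G₁ := G) (G₂ := Multiplicative (ZMod 2 × ZMod 2))
    exact Or.inl ⟨e.trans (MulEquiv.prodMultiplicative _ _)⟩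

theorem conj_mem_zpowers_of_two_mul_orderOf_eq_card {G : Type*} [Group G] [Finite G] {a : G}
    (ha : 2 * orderOf a = Nat.card G) (g : G) : g * a * g⁻¹ ∈ zpowers a := by
  have hindex : (zpowers a).index = 2 := by
    have h := (zpowers a).card_mul_index
    rw [Nat.card_zpowers, ← ha, mul_comm 2] at h
    exact Nat.eq_of_mul_eq_mul_left (orderOf_pos a) h
  exact (normal_of_index_eq_two hindex).conj_mem a (mem_zpowers a) g

theorem existsUnique_apply_eq_self_of_orderOf_eq_prime {α : Type*} [Fintype α]
    [DecidableEq α] {p : ℕ} (hp : p.Prime) (hα : Fintype.card α = p + 1) {σ : Perm α}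
    (hσ : orderOf σ = p) : ∃! x, σ x = x := by
  have hcycle : σ.IsCycle := isCycle_of_prime_order (hσ ▸ hp) <| by
    rw [hσ]; exact (σ.support.card_le_univ).trans_lt (by have := hp.two_le; omega)
  have hsupport : #σ.support = p := hcycle.orderOf ▸ hσ
  obtain ⟨x, hx⟩ := card_eq_one.mp (show #σ.supportᶜ = 1 by rw [card_compl]; omega)
  have hfix (y : α) : σ y = y ↔ y = x := by
    rw [← notMem_support, ← mem_compl, hx, mem_singleton]
  exact ⟨x, (hfix x).mpr rfl, fun y => (hfix y).mp⟩

theorem apply_eq_self_of_conj_mem_zpowers {α : Type*} {σ g : Perm α} {x : α}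
    (hx : σ x = x) (huniq : ∀ y, σ y = y → y = x) (hg : g * σ * g⁻¹ ∈ zpowers σ) :
    g x = x := by
  obtain ⟨k, hk⟩ := mem_zpowers_iff.mp hg
  have hconj : g (σ (g⁻¹ x)) = x := by
    rw [← Perm.mul_apply, ← Perm.mul_apply, ← hk]
    exact zpow_apply_eq_self_of_apply_eq_self hx k
  have := huniq _ (Perm.eq_inv_iff_eq.mpr hconj)
  exact (Perm.inv_eq_iff_eq.mp this).symm

theorem nonempty_mulEquiv_perm_of_forall_apply_eq_self {α : Type*} [Fintype α] [DecidableEq α]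
    {n : ℕ} (hα : Fintype.card α = n + 1) {H : Subgroup (Perm α)} {x : α}
    (hx : ∀ g ∈ H, g x = x) (hH : Nat.card H = n !) : Nonempty (H ≃* Perm (Fin n)) := by
  have hcompl : Fintype.card {y // y ≠ x} = n := by
    rw [Fintype.card_subtype_compl, hα, Fintype.card_unique, Nat.add_sub_cancel]
  set K := (ofSubtype : Perm {y // y ≠ x} →* Perm α).range
  have hle : H ≤ K := fun g hg => mem_range_ofSubtype_iff.mpr fun y hy hyx =>
    mem_support.mp hy (hyx ▸ hx g hg)
  have hK : Nat.card K = n ! := by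
    rw [← Nat.card_congr (MonoidHom.ofInjective ofSubtype_injective).toEquiv, Nat.card_perm,
      Nat.card_eq_fintype_card, hcompl]
  have hHK : H = K := eq_of_le_of_card_ge hle (hK.trans hH.symm).le
  exact ⟨(MulEquiv.subgroupCongr hHK).trans <|
    (MonoidHom.ofInjective ofSubtype_injective).symm.trans
      (Fintype.equivFinOfCardEq hcompl).permCongrHom⟩

theorem nonempty_mulEquiv_perm_three_of_card_eq_six {α : Type*} [Fintype α] [DecidableEq α]
    (hα : Fintype.card α = 4) {H : Subgroup (Perm α)} (hH : Nat.card H = 6) :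
    Nonempty (H ≃* Perm (Fin 3)) := by
  have : Fact (Nat.Prime 3) := ⟨Nat.prime_three⟩
  obtain ⟨a, ha⟩ := exists_prime_orderOf_dvd_card' (G := H) 3 (by rw [hH]; norm_num)
  obtain ⟨x, hx, huniq⟩ := existsUnique_apply_eq_self_of_orderOf_eq_prime Nat.prime_three hα
    (show orderOf (a : Perm α) = 3 by rw [orderOf_coe, ha])
  refine nonempty_mulEquiv_perm_of_forall_apply_eq_self hα (x := x) (fun g hg => ?_) hH
  refine apply_eq_self_of_conj_mem_zpowers hx huniq ?_
  have hconj := conj_mem_zpowers_of_two_mul_orderOf_eq_card (a := a) (by rw [ha, hH]) ⟨g, hg⟩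
  obtain ⟨k, hk⟩ := mem_zpowers_iff.mp hconj
  exact mem_zpowers_iff.mpr ⟨k, by simpa using congrArg Subtype.val hk⟩

theorem card_perm_fin_four : Nat.card (Perm (Fin 4)) = 24 := by
  rw [Nat.card_perm, Nat.card_fin]; rfl

theorem eq_alternatingGroup_of_card_eq_twelve {H : Subgroup (Perm (Fin 4))}
    (hH : Nat.card H = 12) : H = alternatingGroup (Fin 4) := by
  refine eq_alternatingGroup_of_index_eq_two ?_
  have := H.card_mul_index
  rw [hH, card_perm_fin_four] at this
  omega

def dihedralToPerm (n : ℕ) : DihedralGroup n →* Perm (ZMod n) where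
  toFun
    | .r i => Equiv.addRight i
    | .sr i => (Equiv.addRight i).trans (Equiv.neg _)
  map_one' := by rw [← DihedralGroup.r_zero]; ext; simp
  map_mul' := by
    rintro (i | i) (j | j) <;> ext x <;>
      simp only [DihedralGroup.r_mul_r, DihedralGroup.r_mul_sr, DihedralGroup.sr_mul_r,
        DihedralGroup.sr_mul_sr, Perm.mul_apply, trans_apply, coe_addRight, Equiv.neg_apply] <;>
      ring

theorem dihedralToPerm_four_injective : Function.Injective (dihedralToPerm 4) := by
  decide

theorem nonempty_mulEquiv_dihedralGroup_four_of_card_eq_eight {H : Subgroup (Perm (Fin 4))}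
    (hH : Nat.card H = 8) : Nonempty (H ≃* DihedralGroup 4) := by
  have : Fact (Nat.Prime 2) := ⟨Nat.prime_two⟩
  let toSylow (K : Subgroup (Perm (Fin 4))) (hK : Nat.card K = 8) : Sylow 2 (Perm (Fin 4)) :=
    IsPGroup.toSylow (IsPGroup.of_card (n := 3) hK) <| by
      have := K.card_mul_index
      rw [hK, card_perm_fin_four] at this
      omega
  -- `ZMod 4` is `Fin 4` by definition, so this range is a subgroup of `Perm (Fin 4)`.
  have hD : Nat.card (dihedralToPerm 4).range = 8 := by
    rw [← Nat.card_congr (MonoidHom.ofInjective dihedralToPerm_four_injective).toEquiv,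
      Nat.card_eq_fintype_card, DihedralGroup.card]
  exact ⟨(Sylow.equiv (toSylow H hH) (toSylow (dihedralToPerm 4).range hD)).trans
    (MonoidHom.ofInjective dihedralToPerm_four_injective).symm⟩

end S4Subgroups

open S4Subgroups in
/-- Every proper subgroup of the symmetric group S4 is isomorphic to one of:
the trivial group, C2, C3, C2 × C2, C4, S3, the dihedral group of order 8, or A4. -/
theorem S4_proper_subgroup_classification
    (H : Subgroup (Equiv.Perm (Fin 4))) (hH : H ≠ ⊤) :
    Nonempty (H ≃* Multiplicative (ZMod 1)) ∨
    Nonempty (H ≃* Multiplicative (ZMod 2)) ∨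
    Nonempty (H ≃* Multiplicative (ZMod 3)) ∨
    Nonempty (H ≃* (Multiplicative (ZMod 2) × Multiplicative (ZMod 2))) ∨
    Nonempty (H ≃* Multiplicative (ZMod 4)) ∨
    Nonempty (H ≃* Equiv.Perm (Fin 3)) ∨
    Nonempty (H ≃* DihedralGroup 4) ∨
    Nonempty (H ≃* ↥(alternatingGroup (Fin 4))) := by
  have hdvd : Nat.card H ∈ Nat.divisors 24 :=
    Nat.mem_divisors.mpr ⟨card_perm_fin_four ▸ H.card_subgroup_dvd_card, by norm_num⟩
  have hne : Nat.card H ≠ 24 := fun h =>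
    hH (H.eq_top_of_card_eq (h.trans card_perm_fin_four.symm))
  rw [show Nat.divisors 24 = {1, 2, 3, 4, 6, 8, 12, 24} by decide] at hdvd
  simp only [mem_insert, mem_singleton, hne, or_false] at hdvd
  rcases hdvd with h | h | h | h | h | h | h
  · have := (Nat.card_eq_one_iff_unique.mp h).1
    exact Or.inl (nonempty_mulEquiv_zmod_of_isCyclic h)
  · have : Fact (Nat.Prime 2) := ⟨Nat.prime_two⟩
    have := isCyclic_of_prime_card h
    exact Or.inr <| Or.inl (nonempty_mulEquiv_zmod_of_isCyclic h)
  · have : Fact (Nat.Prime 3) := ⟨Nat.prime_three⟩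
    have := isCyclic_of_prime_card h
    exact Or.inr <| Or.inr <| Or.inl (nonempty_mulEquiv_zmod_of_isCyclic h)
  · have := nonempty_mulEquiv_of_card_eq_four h
    tauto
  · have := nonempty_mulEquiv_perm_three_of_card_eq_six (Fintype.card_fin 4) h
    tauto
  · have := nonempty_mulEquiv_dihedralGroup_four_of_card_eq_eight h
    tauto
  · have := eq_alternatingGroup_of_card_eq_twelve h
    exact Or.inr <| Or.inr <| Or.inr <| Or.inr <| Or.inr <| Or.inr <| Or.inr
      ⟨MulEquiv.subgroupCongr this⟩
end

section
/- Let r, s ∈ Equiv.Perm (Fin 24) be given in cycle notation (on labels 1,…,24) by r = (1 4 9 5)(3 20 24 14)(6 18 21 7)(10 16 22 23)(11 12)(13 17) and s = (1 3 9 24)(4 14 5 20)(6 22 21 10)(7 23 18 16)(11 17)(12 13). Then the subgroup of Equiv.Perm (Fin 24) generated by r and s has order 8, r and s each have order 4, r² = s², and s·r·s⁻¹ = r⁻¹; in particular this subgroup is isomorphic to the quaternion group Q8. -/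
/-!
Sending `a i ↦ x ^ i` and `xa i ↦ y * x ^ i` defines a homomorphism from the generalized
quaternion group `QuaternionGroup n` to any group as soon as `x ^ (2n) = 1`, `y ^ 2 = x ^ n` and
`y x y⁻¹ = x⁻¹`, since these are its defining relations. Its kernel is trivial when `x` has
order exactly `2n` and `y ∉ ⟨x⟩`, and its image is the subgroup generated by `x` and `y`. For the
permutations `r` and `s` with `n = 2` all hypotheses are finite computations.
-/

def r : Equiv.Perm (Fin 24) :=
  c[1, 4, 9, 5] * c[3, 20, 24, 14] * c[6, 18, 21, 7] * c[10, 16, 22, 23] * c[11, 12] *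
    c[13, 17]

def s : Equiv.Perm (Fin 24) :=
  c[1, 3, 9, 24] * c[4, 14, 5, 20] * c[6, 22, 21, 10] * c[7, 23, 18, 16] * c[11, 17] *
    c[12, 13]

section

variable {G : Type*} [Group G] {m : ℕ} {x : G}

theorem pow_eq_pow_of_natCast_eq (hx : x ^ m = 1) {k l : ℕ} (h : (k : ZMod m) = l) :
    x ^ k = x ^ l :=
  pow_eq_pow_iff_modEq.mpr
    (((ZMod.natCast_eq_natCast_iff _ _ _).mp h).of_dvd (orderOf_dvd_of_pow_eq_one hx))

theorem pow_val_add [NeZero m] (hx : x ^ m = 1) (i j : ZMod m) :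
    x ^ (i + j).val = x ^ i.val * x ^ j.val := by
  rw [← pow_add]
  exact pow_eq_pow_of_natCast_eq hx (by simp)

theorem pow_val_neg [NeZero m] (hx : x ^ m = 1) (i : ZMod m) : x ^ (-i).val = (x ^ i.val)⁻¹ := by
  rw [eq_inv_iff_mul_eq_one, ← pow_val_add hx, neg_add_cancel, ZMod.val_zero, pow_zero]

theorem pow_mul_eq_mul_inv_of_conj_eq_inv {y : G} (hyx : y * x * y⁻¹ = x⁻¹) (k : ℕ) :
    x ^ k * y = y * (x ^ k)⁻¹ := by
  have hconj : y⁻¹ * x * y = x⁻¹ :=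
    calc y⁻¹ * x * y = y⁻¹ * (x⁻¹)⁻¹ * y := by rw [inv_inv]
      _ = y⁻¹ * (y * x * y⁻¹)⁻¹ * y := by rw [hyx]
      _ = x⁻¹ := by group
  have hk : y⁻¹ * x ^ k * y = (x ^ k)⁻¹ := by
    simpa [hconj, inv_pow] using (conj_pow (a := y⁻¹) (b := x) (i := k)).symm
  rw [← hk]; group

end

namespace QuaternionGroup

variable {n : ℕ} [NeZero n] {G : Type*} [Group G] {x y : G}

def liftFun (x y : G) : QuaternionGroup n → G
  | a i => x ^ i.val
  | xa i => y * x ^ i.val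

def lift (hx : x ^ (2 * n) = 1) (hy : y ^ 2 = x ^ n) (hyx : y * x * y⁻¹ = x⁻¹) :
    QuaternionGroup n →* G where
  toFun := liftFun x y
  map_one' := show x ^ (0 : ZMod (2 * n)).val = 1 by simp
  map_mul' := by
    have hsub (i j : ZMod (2 * n)) : x ^ (j - i).val = (x ^ i.val)⁻¹ * x ^ j.val := by
      rw [sub_eq_neg_add, pow_val_add hx, pow_val_neg hx]
    rintro (i | i) (j | j)
    · simp only [a_mul_a, liftFun, pow_val_add hx]
    · simp only [a_mul_xa, liftFun, hsub, ← mul_assoc, pow_mul_eq_mul_inv_of_conj_eq_inv hyx]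
    · simp only [xa_mul_a, liftFun, pow_val_add hx, mul_assoc]
    · have hn : y * y = x ^ (n : ZMod (2 * n)).val := by
        rw [← sq, hy]; exact pow_eq_pow_of_natCast_eq hx (by simp)
      simp only [xa_mul_xa, liftFun, hsub, pow_val_add hx]
      rw [mul_assoc y, ← mul_assoc (x ^ i.val), pow_mul_eq_mul_inv_of_conj_eq_inv hyx,
        ← mul_assoc y, ← mul_assoc y, hn]
      group

theorem lift_a (hx : x ^ (2 * n) = 1) (hy : y ^ 2 = x ^ n) (hyx : y * x * y⁻¹ = x⁻¹)
    (i : ZMod (2 * n)) : lift hx hy hyx (a i) = x ^ i.val := rfl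

theorem lift_xa (hx : x ^ (2 * n) = 1) (hy : y ^ 2 = x ^ n) (hyx : y * x * y⁻¹ = x⁻¹)
    (i : ZMod (2 * n)) : lift hx hy hyx (xa i) = y * x ^ i.val := rfl

theorem lift_injective (hx : x ^ (2 * n) = 1) (hy : y ^ 2 = x ^ n) (hyx : y * x * y⁻¹ = x⁻¹)
    (hord : orderOf x = 2 * n) (hy' : y ∉ Subgroup.zpowers x) :
    Function.Injective (lift hx hy hyx) := by
  rw [injective_iff_map_eq_one]
  rintro (i | i) h
  · rw [lift_a] at h
    have hdvd : orderOf x ∣ i.val := orderOf_dvd_of_pow_eq_one h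
    rw [hord] at hdvd
    rw [(ZMod.val_eq_zero i).mp (Nat.eq_zero_of_dvd_of_lt hdvd (ZMod.val_lt i)), a_zero]
  · rw [lift_xa, mul_eq_one_iff_eq_inv] at h
    exact absurd (h ▸ inv_mem (pow_mem (Subgroup.mem_zpowers x) _)) hy'

theorem range_lift (hx : x ^ (2 * n) = 1) (hy : y ^ 2 = x ^ n) (hyx : y * x * y⁻¹ = x⁻¹) :
    (lift hx hy hyx).range = Subgroup.closure {x, y} := by
  have hxmem : x ∈ Subgroup.closure {x, y} := Subgroup.subset_closure (by simp)
  have hymem : y ∈ Subgroup.closure {x, y} := Subgroup.subset_closure (by simp)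
  apply le_antisymm
  · rintro _ ⟨i | i, rfl⟩
    · exact pow_mem hxmem _
    · exact mul_mem hymem (pow_mem hxmem _)
  · rw [Subgroup.closure_le, Set.insert_subset_iff, Set.singleton_subset_iff]
    exact ⟨⟨a 1, (pow_eq_pow_of_natCast_eq (l := 1) hx (by simp)).trans (pow_one x)⟩,
      ⟨xa 0, by rw [lift_xa, ZMod.val_zero, pow_zero, mul_one]⟩⟩

theorem nonempty_closure_mulEquiv (hord : orderOf x = 2 * n) (hy : y ^ 2 = x ^ n)
    (hyx : y * x * y⁻¹ = x⁻¹) (hy' : y ∉ Subgroup.zpowers x) :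
    Nonempty (Subgroup.closure {x, y} ≃* QuaternionGroup n) :=
  have hx : x ^ (2 * n) = 1 := hord ▸ pow_orderOf_eq_one x
  ⟨((MonoidHom.ofInjective (lift_injective hx hy hyx hord hy')).trans
    (MulEquiv.subgroupCongr (range_lift hx hy hyx))).symm⟩

end QuaternionGroup

set_option maxRecDepth 10000 in
theorem r_sq_eq_s_sq : r ^ 2 = s ^ 2 := by decide

set_option maxRecDepth 10000 in
theorem s_mul_r_mul_s_inv : s * r * s⁻¹ = r⁻¹ := by decide

set_option maxRecDepth 10000 in
theorem orderOf_r : orderOf r = 4 := by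
  rw [orderOf_eq_iff (by norm_num)]; decide

set_option maxRecDepth 10000 in
theorem orderOf_s : orderOf s = 4 := by
  rw [orderOf_eq_iff (by norm_num)]; decide

set_option maxRecDepth 10000 in
theorem s_notMem_zpowers_r : s ∉ Subgroup.zpowers r := by
  rw [(isOfFinOrder_of_finite r).mem_zpowers_iff_mem_range_orderOf, orderOf_r]
  decide

/-- The subgroup generated by r and s has order 8, r and s have order 4, r² = s²,
s·r·s⁻¹ = r⁻¹, and this subgroup is isomorphic to the quaternion group Q8. -/
theorem Q8_subgroup_of_H75 :
    Nat.card ↥(Subgroup.closure ({r, s} : Set (Equiv.Perm (Fin 24)))) = 8 ∧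
    orderOf r = 4 ∧ orderOf s = 4 ∧ r ^ 2 = s ^ 2 ∧ s * r * s⁻¹ = r⁻¹ ∧
    Nonempty (↥(Subgroup.closure ({r, s} : Set (Equiv.Perm (Fin 24)))) ≃*
      QuaternionGroup 2) := by
  obtain ⟨e⟩ := QuaternionGroup.nonempty_closure_mulEquiv (n := 2) orderOf_r r_sq_eq_s_sq.symm
    s_mul_r_mul_s_inv s_notMem_zpowers_r
  refine ⟨?_, orderOf_r, orderOf_s, r_sq_eq_s_sq, s_mul_r_mul_s_inv, ⟨e⟩⟩
  rw [Nat.card_congr e.toEquiv, Nat.card_eq_fintype_card, QuaternionGroup.card]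
end

section
/- With r, s as in the previous statement (r = (1 4 9 5)(3 20 24 14)(6 18 21 7)(10 16 22 23)(11 12)(13 17), s = (1 3 9 24)(4 14 5 20)(6 22 21 10)(7 23 18 16)(11 17)(12 13) in Equiv.Perm (Fin 24)), the subgroup generated by r and s has exactly two orbits of size 8 on the 16-element set {1, 3, 4, 5, 6, 7, 9, 10, 14, 16, 18, 20, 21, 22, 23, 24}, namely {1, 3, 4, 5, 9, 14, 20, 24} and {6, 7, 10, 16, 18, 21, 22, 23}. -/
open MulAction Pointwise

section

variable {G α : Type*} [Group G] [MulAction G α]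

theorem Finset.smul_finset_eq_self_of_forall_smul_mem [DecidableEq α] {g : G} {T : Finset α}
    (h : ∀ y ∈ T, g • y ∈ T) : g • T = T :=
  Finset.eq_of_subset_of_card_le (Finset.smul_finset_subset_iff.2 fun y hy => by
      simpa [Finset.mem_inv_smul_finset_iff] using h y hy)
    (Finset.card_smul_finset g T).ge

theorem Subgroup.closure_le_stabilizer_of_forall_smul_mem [DecidableEq α] {S : Set G}
    {T : Finset α} (hS : ∀ g ∈ S, ∀ y ∈ T, g • y ∈ T) : Subgroup.closure S ≤ stabilizer G T :=
  (Subgroup.closure_le _).2 fun g hg => Finset.smul_finset_eq_self_of_forall_smul_mem (hS g hg)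

theorem orbit_closure_eq_of_forall_smul_mem {S : Set G} {T : Finset α} {x : α} (hx : x ∈ T)
    (hS : ∀ g ∈ S, ∀ y ∈ T, g • y ∈ T) (hT : ∀ y ∈ T, ∃ g ∈ Subgroup.closure S, g • x = y) :
    orbit (Subgroup.closure S) x = T := by
  classical
  refine Set.Subset.antisymm ?_ fun y hy => ?_
  · rintro _ ⟨⟨g, hg⟩, rfl⟩
    have hgT : g • T = T := Subgroup.closure_le_stabilizer_of_forall_smul_mem hS hg
    exact hgT ▸ Finset.smul_mem_smul_finset hx
  · obtain ⟨g, hg, rfl⟩ := hT y hy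
    exact ⟨⟨g, hg⟩, rfl⟩

end

theorem pow_mul_pow_mem_closure_pair {G : Type*} [Group G] (a b : G) (i j : ℕ) :
    b ^ j * a ^ i ∈ Subgroup.closure ({a, b} : Set G) :=
  mul_mem ((Subgroup.closure _).pow_mem (Subgroup.subset_closure (by simp)) j)
    ((Subgroup.closure _).pow_mem (Subgroup.subset_closure (by simp)) i)

theorem orbit_closure_r_s_eq {x : Fin 24} {T : Finset (Fin 24)} (hx : x ∈ T)
    (hr : ∀ y ∈ T, r y ∈ T) (hs : ∀ y ∈ T, s y ∈ T)
    (hT : ∀ y ∈ T, ∃ i : Fin 4, ∃ j : Fin 2, (s ^ (j : ℕ) * r ^ (i : ℕ)) x = y) :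
    orbit (Subgroup.closure ({r, s} : Set (Equiv.Perm (Fin 24)))) x = T :=
  orbit_closure_eq_of_forall_smul_mem hx (by simpa using ⟨hr, hs⟩) fun y hy => by
    obtain ⟨i, j, h⟩ := hT y hy
    exact ⟨_, pow_mul_pow_mem_closure_pair r s i j, h⟩

set_option maxRecDepth 4000 in
/-- The subgroup generated by r and s has exactly two orbits of size 8 on the
16-element set {1,3,4,5,6,7,9,10,14,16,18,20,21,22,23,24}, namely
{1,3,4,5,9,14,20,24} and {6,7,10,16,18,21,22,23}. -/
theorem Q8_two_orbits_of_size_eight :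
    MulAction.orbit ↥(Subgroup.closure ({r, s} : Set (Equiv.Perm (Fin 24))))
        (1 : Fin 24) = ({1, 3, 4, 5, 9, 14, 20, 24} : Set (Fin 24)) ∧
    MulAction.orbit ↥(Subgroup.closure ({r, s} : Set (Equiv.Perm (Fin 24))))
        (6 : Fin 24) = ({6, 7, 10, 16, 18, 21, 22, 23} : Set (Fin 24)) ∧
    ({1, 3, 4, 5, 9, 14, 20, 24} : Set (Fin 24)).ncard = 8 ∧
    ({6, 7, 10, 16, 18, 21, 22, 23} : Set (Fin 24)).ncard = 8 ∧
    ({1, 3, 4, 5, 9, 14, 20, 24} : Set (Fin 24)) ∪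
        ({6, 7, 10, 16, 18, 21, 22, 23} : Set (Fin 24)) =
      ({1, 3, 4, 5, 6, 7, 9, 10, 14, 16, 18, 20, 21, 22, 23, 24} : Set (Fin 24)) := by
  refine ⟨?_, ?_, ?_, ?_, ?_⟩
  · simpa using orbit_closure_r_s_eq (T := {1, 3, 4, 5, 9, 14, 20, 24}) (by decide)
      (by decide) (by decide) (by decide)
  · simpa using orbit_closure_r_s_eq (T := {6, 7, 10, 16, 18, 21, 22, 23}) (by decide)
      (by decide) (by decide) (by decide)
  · simp [Set.ncard_insert_of_notMem]
  · simp [Set.ncard_insert_of_notMem]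
  · ext y
    simp only [Set.mem_union, Set.mem_insert_iff, Set.mem_singleton_iff]
    omega
end
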